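/- arXiv:2506.14693 — 7 statements merged into one kernel-verified Lean document; each statement's English description precedes it below -/
import Mathlib

section
/- Let H be a complex Hilbert space and A, B ∈ B(H). Suppose that for every vector ψ ∈ H there exists a complex number λ_ψ with |λ_ψ| = 1 such that (A∘B)ψ = λ_ψ • (B∘A)ψ. Then there exists a single complex number λ with |λ| = 1 such that A∘B = λ • (B∘A); equivalently, there exists φ ∈ ℝ with [A,B]_φ = 0. -/
/-!
A linear map `T` with `T x ∈ K ∙ S x` for every `x` is a scalar multiple of `S`. The scalar read
off at a point with `S x ≠ 0` is the same at every other such point `y`: if `S y` is a multiple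
`μ • S x`, then `y - μ • x ∈ ker S ⊆ ker T`; otherwise `S x, S y` are independent and comparing
`T (x + y)` with `T x + T y` forces the two scalars to agree. Applied to `T = A ∘ B`, `S = B ∘ A`,
the common scalar is one of the given unimodular ones, i.e. `e^{iφ}` for some `φ`.
-/

namespace LinearMap

variable {K M N : Type*} [Field K] [AddCommGroup M] [Module K M] [AddCommGroup N] [Module K N]
  {T S : M →ₗ[K] N}

theorem apply_eq_smul_of_mem_span_singleton (hTS : ∀ x, ∃ c : K, T x = c • S x) {x y : M}
    {a : K} (hx : T x = a • S x) (hy : S y ∈ K ∙ S x) : T y = a • S y := by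
  obtain ⟨μ, hμ⟩ := Submodule.mem_span_singleton.mp hy
  obtain ⟨c, hc⟩ := hTS (y - μ • x)
  have hT : T (y - μ • x) = 0 := by simp [hc, ← hμ]
  rw [map_sub, map_smul, sub_eq_zero] at hT
  rw [hT, hx, ← hμ, smul_comm]

theorem smul_eq_of_linearIndependent_pair (hTS : ∀ x, ∃ c : K, T x = c • S x) {x y : M}
    {a b : K} (hind : LinearIndependent K ![S x, S y]) (hx : T x = a • S x)
    (hy : T y = b • S y) : a = b := by
  obtain ⟨c, hc⟩ := hTS (x + y)
  have hcomb : (a - c) • S x + (b - c) • S y = 0 := by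
    rw [map_add, map_add, hx, hy, smul_add] at hc
    rw [sub_smul, sub_smul, sub_add_sub_comm, hc, sub_self]
  obtain ⟨hac, hbc⟩ := LinearIndependent.pair_iff.mp hind _ _ hcomb
  rw [sub_eq_zero.mp hac, sub_eq_zero.mp hbc]

theorem eq_smul_of_forall_exists_smul (hTS : ∀ x, ∃ c : K, T x = c • S x) {x : M} {a : K}
    (hSx : S x ≠ 0) (hx : T x = a • S x) : T = a • S := by
  ext y
  by_cases hspan : S y ∈ K ∙ S x
  · exact apply_eq_smul_of_mem_span_singleton hTS hx hspan
  · have hind : LinearIndependent K ![S x, S y] := by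
      rw [LinearIndependent.pair_iff' hSx]
      exact fun μ hμ => hspan (Submodule.mem_span_singleton.mpr ⟨μ, hμ⟩)
    obtain ⟨b, hy⟩ := hTS y
    rwa [smul_eq_of_linearIndependent_pair hTS hind hx hy]

end LinearMap

theorem pointwise_unimodular_to_global_anyonic_commutation_general
    {H : Type*} [NormedAddCommGroup H] [InnerProductSpace ℂ H]
    (A B : H →L[ℂ] H)
    (h : ∀ ψ : H, ∃ lam : ℂ, ‖lam‖ = 1 ∧ (A ∘L B) ψ = lam • ((B ∘L A) ψ)) :
    (∃ lam : ℂ, ‖lam‖ = 1 ∧ A ∘L B = lam • (B ∘L A)) ∧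
      (∃ φ : ℝ, A ∘L B - Complex.exp (φ * Complex.I) • (B ∘L A) = 0) := by
  have hglobal : ∃ lam : ℂ, ‖lam‖ = 1 ∧ A ∘L B = lam • (B ∘L A) := by
    by_cases hS : B ∘L A = 0
    · refine ⟨1, norm_one, ContinuousLinearMap.ext fun ψ => ?_⟩
      obtain ⟨lam, -, hψ⟩ := h ψ
      simp [hψ, hS]
    · obtain ⟨x, hx⟩ := DFunLike.ne_iff.mp hS
      obtain ⟨lam, hlam, hTx⟩ := h x
      refine ⟨lam, hlam, ContinuousLinearMap.coe_injective ?_⟩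
      exact LinearMap.eq_smul_of_forall_exists_smul (fun ψ => (h ψ).imp fun _ => And.right) hx hTx
  refine ⟨hglobal, ?_⟩
  obtain ⟨lam, hlam, hAB⟩ := hglobal
  obtain ⟨φ, hφ⟩ := (Complex.norm_eq_one_iff lam).mp hlam
  exact ⟨φ, by rw [hφ, hAB, sub_self]⟩

/-- If `A∘B` and `B∘A` agree pointwise up to a (state-dependent)
unimodular scalar, then they agree globally up to a single unimodular scalar;
equivalently there is a phase `φ ∈ ℝ` with `[A,B]_φ = A∘B - e^{iφ} • (B∘A) = 0`. -/
theorem pointwise_unimodular_to_global_anyonic_commutation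
    {H : Type*} [NormedAddCommGroup H] [InnerProductSpace ℂ H] [CompleteSpace H]
    (A B : H →L[ℂ] H)
    (h : ∀ ψ : H, ∃ lam : ℂ, ‖lam‖ = 1 ∧ (A ∘L B) ψ = lam • ((B ∘L A) ψ)) :
    (∃ lam : ℂ, ‖lam‖ = 1 ∧ A ∘L B = lam • (B ∘L A)) ∧
      (∃ φ : ℝ, A ∘L B - Complex.exp (φ * Complex.I) • (B ∘L A) = 0) :=
  pointwise_unimodular_to_global_anyonic_commutation_general A B h
end

section
/- Let H be a complex Hilbert space and A, B ∈ B(H) positive operators. If there exists a complex number λ such that √A ∘ √B = λ • (√B ∘ √A), then A∘B = B∘A. -/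
/-!
Write `a = √A`, `b = √B` and `ab = λ • ba`. Pushing `λ` through the product twice gives
`AB = a(ab)b = λ² • (ba)(ab) = λ² • (ab)⋆(ab)`, a scalar multiple of a positive operator,
while `σ(AB) \ {0} = σ(a·abb) \ {0} = σ(abb·a) \ {0}` consists of nonnegative reals since
`abba = (ab)(ab)⋆ ≥ 0`. So either `(ab)⋆(ab) = 0` or `λ²‖(ab)⋆(ab)‖ ∈ σ(AB)` forces `λ² ≥ 0`;
in both cases `AB` is self-adjoint, i.e. `AB = (AB)⋆ = BA`.
-/

lemma mul_self_mul_mul_self_of_mul_eq_smul {R A : Type*} [CommSemiring R] [Semiring A]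
    [Algebra R A] {a b : A} {μ : R} (h : a * b = μ • (b * a)) :
    a * a * (b * b) = μ ^ 2 • (b * a * (a * b)) :=
  calc a * a * (b * b) = a * (a * b) * b := by simp only [mul_assoc]
    _ = μ • (a * (b * a) * b) := by rw [h, mul_smul_comm, smul_mul_assoc]
    _ = μ • (a * b * (a * b)) := by simp only [mul_assoc]
    _ = μ • (μ • (b * a) * (a * b)) := by rw [← h]
    _ = μ ^ 2 • (b * a * (a * b)) := by rw [smul_mul_assoc, smul_smul, sq]

section

open ComplexOrder

variable {𝒜 : Type*} [CStarAlgebra 𝒜] [PartialOrder 𝒜] [StarOrderedRing 𝒜]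

lemma IsSelfAdjoint.nonneg_of_mem_spectrum_mul_self_mul_mul_self {a b : 𝒜}
    (ha : IsSelfAdjoint a) (hb : IsSelfAdjoint b) {z : ℂ}
    (hz : z ∈ spectrum ℂ (a * a * (b * b))) : 0 ≤ z := by
  rcases eq_or_ne z 0 with rfl | hz0
  · rfl
  have hconj : 0 ≤ a * (b * b) * a := by
    simpa only [ha.star_eq] using star_left_conjugate_nonneg hb.mul_self_nonneg a
  have : z ∈ spectrum ℂ (a * (b * b) * a) \ {0} := by
    rw [← spectrum.nonzero_mul_comm, ← mul_assoc]
    exact ⟨hz, hz0⟩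
  exact spectrum_nonneg_of_nonneg hconj this.1

lemma isSelfAdjoint_smul_of_spectrum_nonneg {s : 𝒜} (hs : 0 ≤ s) {μ : ℂ}
    (hσ : ∀ z ∈ spectrum ℂ (μ • s), 0 ≤ z) : IsSelfAdjoint (μ • s) := by
  by_cases h0 : μ • s = 0
  · rw [h0]; exact .zero 𝒜
  obtain ⟨hμ0, hs0⟩ := smul_ne_zero_iff.mp h0
  have : Nontrivial 𝒜 := nontrivial_of_ne s 0 hs0
  have hnorm : (‖s‖ : ℂ) ∈ spectrum ℂ s := by
    simpa using spectrum.algebraMap_mem ℂ (CStarAlgebra.norm_mem_spectrum_of_nonneg hs)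
  have hmem : μ * ‖s‖ ∈ spectrum ℂ (μ • s) := by
    simpa [Units.smul_def] using (spectrum.smul_mem_smul_iff (r := Units.mk0 μ hμ0)).mpr hnorm
  have hpos : (0 : ℂ) < ‖s‖ := by exact_mod_cast norm_pos_iff.mpr hs0
  have hμ : 0 ≤ μ := by
    simpa [hpos.ne'] using mul_nonneg (hσ _ hmem) (inv_nonneg.mpr hpos.le)
  exact (IsSelfAdjoint.of_nonneg hμ).smul (.of_nonneg hs)

theorem IsSelfAdjoint.commute_mul_self_of_mul_eq_smul {a b : 𝒜} (ha : IsSelfAdjoint a)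
    (hb : IsSelfAdjoint b) {μ : ℂ} (h : a * b = μ • (b * a)) : Commute (a * a) (b * b) := by
  have hσ := fun z (hz : z ∈ spectrum ℂ (a * a * (b * b))) ↦
    ha.nonneg_of_mem_spectrum_mul_self_mul_mul_self hb hz
  have hsa : IsSelfAdjoint (a * a * (b * b)) := by
    rw [mul_self_mul_mul_self_of_mul_eq_smul h] at hσ ⊢
    refine isSelfAdjoint_smul_of_spectrum_nonneg ?_ hσ
    simpa only [star_mul, ha.star_eq, hb.star_eq] using star_mul_self_nonneg (a * b)
  simpa only [Commute, SemiconjBy, star_mul, ha.star_eq, hb.star_eq, mul_assoc]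
    using hsa.star_eq.symm

end

/-- If `A, B` are positive bounded operators on a complex Hilbert
space whose (unique) positive square roots `√A`, `√B` satisfy
`√A ∘ √B = λ • (√B ∘ √A)` for some `λ ∈ ℂ`, then `A∘B = B∘A`. -/
theorem sqrt_anyonic_comm_implies_bosonic_comm
    {H : Type*} [NormedAddCommGroup H] [InnerProductSpace ℂ H] [CompleteSpace H]
    (A B : H →L[ℂ] H) (hA : A.IsPositive) (hB : B.IsPositive)
    (h : ∃ lam : ℂ, CFC.sqrt A ∘L CFC.sqrt B = lam • (CFC.sqrt B ∘L CFC.sqrt A)) :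
    A ∘L B = B ∘L A := by
  obtain ⟨lam, h⟩ := h
  have hA' : 0 ≤ A := (ContinuousLinearMap.nonneg_iff_isPositive A).mpr hA
  have hB' : 0 ≤ B := (ContinuousLinearMap.nonneg_iff_isPositive B).mpr hB
  have := IsSelfAdjoint.commute_mul_self_of_mul_eq_smul (CFC.sqrt_nonneg A).isSelfAdjoint
    (CFC.sqrt_nonneg B).isSelfAdjoint h
  rwa [CFC.sqrt_mul_sqrt_self A hA', CFC.sqrt_mul_sqrt_self B hB'] at this
end

section
/- Let H be a complex Hilbert space, n ∈ ℕ, and M₁, …, Mₙ ∈ B(H) with ∑_{i=1}^n Mᵢ† ∘ Mᵢ = 1. Let N ∈ B(H) and suppose that for each i ∈ {1, …, n} there exists φᵢ ∈ ℝ with N ∘ Mᵢ = e^{iφᵢ} • (Mᵢ ∘ N). Then ∑_{i=1}^n Mᵢ† ∘ (N† ∘ N) ∘ Mᵢ = N† ∘ N. -/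
/-- If `{Mᵢ}` is a complete family of Kraus operators
(`∑ᵢ Mᵢ† ∘ Mᵢ = 1`) and `N` anyonically commutes with every `Mᵢ`
(`N ∘ Mᵢ = e^{iφᵢ} • (Mᵢ ∘ N)` for some `φᵢ ∈ ℝ`), then
`∑ᵢ Mᵢ† ∘ (N† ∘ N) ∘ Mᵢ = N† ∘ N`. -/
theorem nonselective_invariance_of_effect
    {H : Type*} [NormedAddCommGroup H] [InnerProductSpace ℂ H] [CompleteSpace H]
    (n : ℕ) (M : Fin n → (H →L[ℂ] H))
    (hM : ∑ i, ContinuousLinearMap.adjoint (M i) ∘L M i = 1)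
    (N : H →L[ℂ] H)
    (h : ∀ i, ∃ φ : ℝ, N ∘L M i = Complex.exp (φ * Complex.I) • (M i ∘L N)) :
    ∑ i, ContinuousLinearMap.adjoint (M i) ∘L
        ((ContinuousLinearMap.adjoint N ∘L N) ∘L M i) =
      ContinuousLinearMap.adjoint N ∘L N := by
  have key : ∀ i, ContinuousLinearMap.adjoint (M i) ∘L
      ((ContinuousLinearMap.adjoint N ∘L N) ∘L M i) =
      ContinuousLinearMap.adjoint N ∘L
        ((ContinuousLinearMap.adjoint (M i) ∘L M i) ∘L N) := by
    intro i
    obtain ⟨φ, hφ⟩ := h i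
    have h1 : ContinuousLinearMap.adjoint (N ∘L M i) ∘L (N ∘L M i) =
        ContinuousLinearMap.adjoint N ∘L
          ((ContinuousLinearMap.adjoint (M i) ∘L M i) ∘L N) := by
      rw [hφ, map_smulₛₗ, ContinuousLinearMap.smul_comp, ContinuousLinearMap.comp_smul,
        smul_smul]
      have : (starRingEnd ℂ) (Complex.exp (φ * Complex.I)) *
          Complex.exp (φ * Complex.I) = 1 := by
        rw [← Complex.exp_conj, ← Complex.exp_add]
        simp [Complex.exp_eq_one_iff]
      rw [this, one_smul, ContinuousLinearMap.adjoint_comp]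
      ext x; simp [ContinuousLinearMap.comp_apply]
    rw [← h1, ContinuousLinearMap.adjoint_comp]
    ext x; simp [ContinuousLinearMap.comp_apply]
  rw [Finset.sum_congr rfl fun i _ => key i]
  have : ∑ i : Fin n, ContinuousLinearMap.adjoint N ∘L
      ((ContinuousLinearMap.adjoint (M i) ∘L M i) ∘L N) =
      ContinuousLinearMap.adjoint N ∘L
        ((∑ i, ContinuousLinearMap.adjoint (M i) ∘L M i) ∘L N) := by
    ext x
    simp [ContinuousLinearMap.sum_apply, ContinuousLinearMap.comp_apply,
      map_sum]
  rw [this, hM]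
  ext x; simp
end

section
/- Let H be a finite-dimensional complex inner product space, n ∈ ℕ, and M₁, …, Mₙ linear endomorphisms of H with ∑_{i=1}^n Mᵢ† ∘ Mᵢ = 1. Let N be a linear endomorphism of H such that for each i ∈ {1, …, n} there exists φᵢ ∈ ℝ with N ∘ Mᵢ = e^{iφᵢ} • (Mᵢ ∘ N). Then for every linear endomorphism ρ of H, Tr[(N† ∘ N) ∘ (∑_{i=1}^n Mᵢ ∘ ρ ∘ Mᵢ†)] = Tr[(N† ∘ N) ∘ ρ]. -/
/-- Key step: anyonic commutation gives `Mᵢ† ∘ N† ∘ N ∘ Mᵢ = N† ∘ Mᵢ† ∘ Mᵢ ∘ N`. -/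
lemma key_step {H : Type*} [NormedAddCommGroup H] [InnerProductSpace ℂ H]
    [FiniteDimensional ℂ H] (Mi N : H →ₗ[ℂ] H) (φ : ℝ)
    (hc : N ∘ₗ Mi = Complex.exp (φ * Complex.I) • (Mi ∘ₗ N)) :
    LinearMap.adjoint Mi ∘ₗ (LinearMap.adjoint N ∘ₗ N) ∘ₗ Mi =
      LinearMap.adjoint N ∘ₗ (LinearMap.adjoint Mi ∘ₗ Mi) ∘ₗ N := by
  have h1 : LinearMap.adjoint (N ∘ₗ Mi) ∘ₗ (N ∘ₗ Mi) =
      LinearMap.adjoint Mi ∘ₗ (LinearMap.adjoint N ∘ₗ N) ∘ₗ Mi := by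
    rw [LinearMap.adjoint_comp]
    ext x; simp
  have h2 : LinearMap.adjoint (N ∘ₗ Mi) ∘ₗ (N ∘ₗ Mi) =
      LinearMap.adjoint N ∘ₗ (LinearMap.adjoint Mi ∘ₗ Mi) ∘ₗ N := by
    rw [hc, map_smulₛₗ, LinearMap.adjoint_comp]
    have hunit : (starRingEnd ℂ) (Complex.exp (φ * Complex.I)) *
        Complex.exp (φ * Complex.I) = 1 := by
      rw [← Complex.exp_conj, ← Complex.exp_add]
      have h0 : (starRingEnd ℂ) (↑φ * Complex.I) + ↑φ * Complex.I = 0 := by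
        simp [Complex.conj_ofReal]
      rw [h0, Complex.exp_zero]
    ext x
    simp only [LinearMap.comp_apply, LinearMap.smul_apply, LinearMap.map_smul,
      smul_smul, hunit, one_smul]
  rw [← h1, h2]

/-- Quantum no-signalling for non-selective instantaneous
measurements, finite-dimensional version: if `∑ᵢ Mᵢ† ∘ Mᵢ = 1` and `N`
anyonically commutes with every `Mᵢ`, then for every linear endomorphism `ρ`,
`Tr[(N†∘N) ∘ (∑ᵢ Mᵢ ∘ ρ ∘ Mᵢ†)] = Tr[(N†∘N) ∘ ρ]`. -/
theorem no_signalling_nonselective_finiteDim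
    {H : Type*} [NormedAddCommGroup H] [InnerProductSpace ℂ H] [FiniteDimensional ℂ H]
    (n : ℕ) (M : Fin n → (H →ₗ[ℂ] H))
    (hM : ∑ i, LinearMap.adjoint (M i) ∘ₗ M i = 1)
    (N : H →ₗ[ℂ] H)
    (h : ∀ i, ∃ φ : ℝ, N ∘ₗ M i = Complex.exp (φ * Complex.I) • (M i ∘ₗ N)) :
    ∀ ρ : H →ₗ[ℂ] H,
      LinearMap.trace ℂ H
          ((LinearMap.adjoint N ∘ₗ N) ∘ₗ ∑ i, M i ∘ₗ ρ ∘ₗ LinearMap.adjoint (M i)) =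
        LinearMap.trace ℂ H ((LinearMap.adjoint N ∘ₗ N) ∘ₗ ρ) := by
  intro ρ
  have step : ∀ i : Fin n, LinearMap.trace ℂ H
      ((LinearMap.adjoint N ∘ₗ N) ∘ₗ (M i ∘ₗ ρ ∘ₗ LinearMap.adjoint (M i))) =
      LinearMap.trace ℂ H
        ((LinearMap.adjoint N ∘ₗ (LinearMap.adjoint (M i) ∘ₗ M i) ∘ₗ N) ∘ₗ ρ) := by
    intro i
    obtain ⟨φ, hφ⟩ := h i
    have hk := key_step (M i) N φ hφ
    have e1 : (LinearMap.adjoint N ∘ₗ N) ∘ₗ (M i ∘ₗ ρ ∘ₗ LinearMap.adjoint (M i)) =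
        (((LinearMap.adjoint N ∘ₗ N) ∘ₗ M i) ∘ₗ ρ) ∘ₗ LinearMap.adjoint (M i) := by
      ext x; simp
    have e2 : LinearMap.adjoint (M i) ∘ₗ (((LinearMap.adjoint N ∘ₗ N) ∘ₗ M i) ∘ₗ ρ) =
        (LinearMap.adjoint N ∘ₗ (LinearMap.adjoint (M i) ∘ₗ M i) ∘ₗ N) ∘ₗ ρ := by
      rw [← LinearMap.comp_assoc, ← hk]
    rw [e1, LinearMap.trace_comp_comm', e2]
  have hdistr : (LinearMap.adjoint N ∘ₗ N) ∘ₗ (∑ i, M i ∘ₗ ρ ∘ₗ LinearMap.adjoint (M i)) =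
      ∑ i, (LinearMap.adjoint N ∘ₗ N) ∘ₗ (M i ∘ₗ ρ ∘ₗ LinearMap.adjoint (M i)) := by
    ext x; simp [LinearMap.sum_apply]
  rw [hdistr, map_sum]
  have hsum : ∑ i, LinearMap.trace ℂ H
      ((LinearMap.adjoint N ∘ₗ N) ∘ₗ (M i ∘ₗ ρ ∘ₗ LinearMap.adjoint (M i))) =
      ∑ i, LinearMap.trace ℂ H
        ((LinearMap.adjoint N ∘ₗ (LinearMap.adjoint (M i) ∘ₗ M i) ∘ₗ N) ∘ₗ ρ) :=
    Finset.sum_congr rfl fun i _ => step i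
  rw [hsum, ← map_sum]
  have hfin : ∑ i, (LinearMap.adjoint N ∘ₗ (LinearMap.adjoint (M i) ∘ₗ M i) ∘ₗ N) ∘ₗ ρ =
      (LinearMap.adjoint N ∘ₗ N) ∘ₗ ρ := by
    have : ∑ i, (LinearMap.adjoint N ∘ₗ (LinearMap.adjoint (M i) ∘ₗ M i) ∘ₗ N) ∘ₗ ρ =
        (LinearMap.adjoint N ∘ₗ (∑ i, LinearMap.adjoint (M i) ∘ₗ M i) ∘ₗ N) ∘ₗ ρ := by
      ext x; simp [LinearMap.sum_apply]
    rw [this, hM]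
    ext x; simp
  rw [hfin]
end

section
/- Let H be a complex Hilbert space and A, B ∈ B(H) with A∘B ≠ 0 and A∘B = λ • (B∘A) for some λ ∈ ℂ. If A is self-adjoint or B is self-adjoint, then λ is real (Im λ = 0). -/
/-!
Say `a` is self-adjoint and `a * b = λ • (b * a) ≠ 0`. Taking adjoints gives
`b * (star b * a) = conj λ • s` with `s = b * a * star b` self-adjoint, and `s ≠ 0` by the
C⋆-identity. A nonzero spectral value `t` of `s` is real, and `conj λ * t` is a nonzero spectral
value of `b * (star b * a)`, hence also of the self-adjoint `(star b * a) * b`, so it is real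
too; thus `λ` is real. The case of self-adjoint `b` reduces to this one by taking adjoints.
-/

open ComplexConjugate

section CStarAlgebra

variable {A : Type*} [CStarAlgebra A]

theorem CStarRing.mul_star_mul_eq_zero_iff (b x : A) : b * star b * x = 0 ↔ star b * x = 0 := by
  refine ⟨fun h ↦ ?_, fun h ↦ by rw [mul_assoc, h, mul_zero]⟩
  rw [← CStarRing.star_mul_self_eq_zero_iff, star_mul, star_star, mul_assoc, ← mul_assoc b, h,
    mul_zero]

theorem IsSelfAdjoint.exists_mem_spectrum_ne_zero {s : A} (hs : IsSelfAdjoint s) (h : s ≠ 0) :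
    ∃ t ∈ spectrum ℂ s, t ≠ 0 := by
  by_contra! hspec
  exact h (CFC.eq_zero_of_spectrum_subset_zero (R := ℂ) s hspec hs.isStarNormal)

theorem IsSelfAdjoint.im_eq_zero_of_mul_eq_smul_mul {a b : A} (ha : IsSelfAdjoint a) {lam : ℂ}
    (hne : a * b ≠ 0) (hcomm : a * b = lam • (b * a)) : lam.im = 0 := by
  have hadj : star b * a = conj lam • (a * star b) := by
    simpa [star_mul, star_smul, ha.star_eq] using congrArg star hcomm
  have hmul : b * (star b * a) = conj lam • (b * a * star b) := by
    rw [hadj, mul_smul_comm, ← mul_assoc]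
  have hs : b * a * star b ≠ 0 := by
    intro hs
    have : star b * a = 0 :=
      (CStarRing.mul_star_mul_eq_zero_iff b a).mp (by rw [mul_assoc, hmul, hs, smul_zero])
    exact hne (by simpa [star_mul, ha.star_eq] using congrArg star this)
  obtain ⟨t, ht, ht0⟩ := (ha.conjugate b).exists_mem_spectrum_ne_zero hs
  rcases eq_or_ne lam 0 with rfl | hlam
  · simp
  have hct : conj lam * t ∈ spectrum ℂ (b * (star b * a)) \ {0} := by
    refine ⟨?_, mul_ne_zero ((map_ne_zero _).mpr hlam) ht0⟩
    have : Nontrivial A := nontrivial_of_ne _ _ hs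
    rw [hmul, spectrum.smul_eq_smul _ _ ⟨t, ht⟩]
    exact Set.smul_mem_smul_set ht
  rw [spectrum.nonzero_mul_comm] at hct
  have hct_im := (ha.conjugate' b).im_eq_zero_of_mem_spectrum hct.1
  have ht_im := (ha.conjugate b).im_eq_zero_of_mem_spectrum ht
  have ht_re : t.re ≠ 0 := fun h ↦ ht0 (Complex.ext h ht_im)
  simpa [Complex.mul_im, ht_im, ht_re] using hct_im

theorem im_eq_zero_of_mul_eq_smul_mul {a b : A} {lam : ℂ} (hne : a * b ≠ 0)
    (hcomm : a * b = lam • (b * a)) (hsa : IsSelfAdjoint a ∨ IsSelfAdjoint b) : lam.im = 0 := by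
  rcases hsa with ha | hb
  · exact ha.im_eq_zero_of_mul_eq_smul_mul hne hcomm
  · have hadj : b * star a = conj lam • (star a * b) := by
      simpa [star_mul, star_smul, hb.star_eq] using congrArg star hcomm
    have hne' : b * star a ≠ 0 := by simpa [star_mul, hb.star_eq] using star_ne_zero.mpr hne
    simpa using hb.im_eq_zero_of_mul_eq_smul_mul hne' hadj

end CStarAlgebra

/-- Brooke et al., part 1. If `A∘B ≠ 0`, `A∘B = λ • (B∘A)`,
and `A` or `B` is self-adjoint, then `λ` is real. -/
theorem comm_conditions_selfAdjoint_real
    {H : Type*} [NormedAddCommGroup H] [InnerProductSpace ℂ H] [CompleteSpace H]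
    (A B : H →L[ℂ] H) (lam : ℂ)
    (hne : A ∘L B ≠ 0) (hcomm : A ∘L B = lam • (B ∘L A))
    (hsa : IsSelfAdjoint A ∨ IsSelfAdjoint B) :
    lam.im = 0 :=
  im_eq_zero_of_mul_eq_smul_mul hne hcomm hsa
end

section
/- Let H be a complex Hilbert space, A, B ∈ B(H) with A∘B ≠ 0, and φ ∈ [0, 2π) with A∘B = e^{iφ} • (B∘A). Then: (1) if A is self-adjoint or B is self-adjoint, then φ = 0 or φ = π; (2) if A and B are both self-adjoint and at least one of them is positive, then φ = 0. -/
open Complex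
open scoped ComplexStarModule

/-!
If `a`, `s` are self-adjoint and `a s = e^{iφ} s a ≠ 0`, then `e^{-iφ/2} a s` is self-adjoint, so
the spectrum of `a s` lies on the line `e^{iφ/2} ℝ`. Away from `0` it agrees with the spectrum of
`s a = (a s)⋆`, which lies on the conjugate line `e^{-iφ/2} ℝ`. Since `a s` is normal and nonzero it
has a nonzero spectral value, so the two lines coincide and `e^{iφ}` is real. If only `a` is
self-adjoint, the relation passes to the real and imaginary parts of `b` (taking adjoints uses
`|e^{iφ}| = 1`), and one of them still has nonzero product with `a`; a self-adjoint `b` is reduced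
to this case by taking adjoints.

For `φ = π`, an anticommuting `b` commutes with `a²`, hence with `a = √(a²)` when `a ≥ 0`, so
`a b = b a = -a b` vanishes.
-/

theorem star_exp_ofReal_mul_I (φ : ℝ) : star (cexp (φ * I)) = cexp ((-φ : ℝ) * I) := by
  rw [Complex.star_def, ← exp_conj, map_mul, conj_ofReal, conj_I, ofReal_neg, neg_mul_comm]

theorem eq_zero_or_eq_pi_of_sin_eq_zero {φ : ℝ} (h0 : 0 ≤ φ) (h2π : φ < 2 * Real.pi)
    (hsin : Real.sin φ = 0) : φ = 0 ∨ φ = Real.pi := by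
  obtain ⟨n, rfl⟩ := Real.sin_eq_zero_iff.mp hsin
  have hn0 : 0 ≤ n := by exact_mod_cast nonneg_of_mul_nonneg_left h0 Real.pi_pos
  have hn2 : n < 2 := by exact_mod_cast lt_of_mul_lt_mul_right h2π Real.pi_pos.le
  obtain rfl | rfl : n = 0 ∨ n = 1 := by omega
  all_goals simp

section StarAlgebra

variable {A : Type*} [Ring A] [StarRing A] [Algebra ℂ A] [StarModule ℂ A]

def twistedCommutant (a : A) (c : ℂ) : Submodule ℂ A :=
  LinearMap.ker (LinearMap.mulLeft ℂ a - c • LinearMap.mulRight ℂ a)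

omit [StarRing A] [StarModule ℂ A] in
theorem mem_twistedCommutant {a x : A} {c : ℂ} :
    x ∈ twistedCommutant a c ↔ a * x = c • (x * a) := by
  simp [twistedCommutant, sub_eq_zero]

theorem star_mul_eq_exp_smul_mul_star {a b : A} {φ : ℝ} (h : a * b = cexp (φ * I) • (b * a)) :
    star b * star a = cexp ((-φ : ℝ) * I) • (star a * star b) := by
  rw [← star_mul, h, star_smul, star_mul, star_exp_ofReal_mul_I]

theorem IsSelfAdjoint.star_mem_twistedCommutant {a x : A} (ha : IsSelfAdjoint a) {φ : ℝ}
    (hx : x ∈ twistedCommutant a (cexp (φ * I))) : star x ∈ twistedCommutant a (cexp (φ * I)) := by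
  rw [mem_twistedCommutant] at hx ⊢
  have hstar := star_mul_eq_exp_smul_mul_star hx
  rw [ha.star_eq] at hstar
  rw [hstar, smul_smul, ← exp_add, ofReal_neg, neg_mul, add_neg_cancel, exp_zero, one_smul]

theorem IsSelfAdjoint.realPart_mem_twistedCommutant {a x : A} (ha : IsSelfAdjoint a) {φ : ℝ}
    (hx : x ∈ twistedCommutant a (cexp (φ * I))) :
    (ℜ x : A) ∈ twistedCommutant a (cexp (φ * I)) := by
  rw [realPart_apply_coe]
  exact Submodule.smul_of_tower_mem _ _ (add_mem hx (ha.star_mem_twistedCommutant hx))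

theorem IsSelfAdjoint.imaginaryPart_mem_twistedCommutant {a x : A} (ha : IsSelfAdjoint a) {φ : ℝ}
    (hx : x ∈ twistedCommutant a (cexp (φ * I))) :
    (ℑ x : A) ∈ twistedCommutant a (cexp (φ * I)) := by
  rw [imaginaryPart_apply_coe]
  exact Submodule.smul_mem _ _ <|
    Submodule.smul_of_tower_mem _ _ (sub_mem hx (ha.star_mem_twistedCommutant hx))

theorem isSelfAdjoint_exp_smul_of_eq_exp_smul_star {x : A} {φ : ℝ}
    (h : x = cexp (φ * I) • star x) : IsSelfAdjoint (cexp ((-(φ / 2) : ℝ) * I) • x) := by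
  rw [IsSelfAdjoint, star_smul, star_exp_ofReal_mul_I]
  conv_rhs => rw [h]
  rw [smul_smul, ← exp_add]
  congr 2
  push_cast
  ring

end StarAlgebra

section CStarAlgebra

variable {A : Type*} [CStarAlgebra A]

theorem exists_mem_spectrum_ne_zero {x : A} [IsStarNormal x] (hx : x ≠ 0) :
    ∃ z ∈ spectrum ℂ x, z ≠ 0 := by
  by_contra! h
  exact hx (CFC.eq_zero_of_spectrum_subset_zero (R := ℂ) x h)

theorem im_mul_eq_zero_of_isSelfAdjoint_smul {x : A} {μ : ℂ} (h : IsSelfAdjoint (μ • x))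
    {z : ℂ} (hz : z ∈ spectrum ℂ x) : (μ * z).im = 0 := by
  rcases eq_or_ne μ 0 with rfl | hμ
  · simp
  · exact h.im_eq_zero_of_mem_spectrum
      (spectrum.smul_mem_smul_iff (r := Units.mk0 μ hμ) |>.mpr hz)

theorem sin_eq_zero_of_isSelfAdjoint_of_isSelfAdjoint {a s : A} (ha : IsSelfAdjoint a)
    (hs : IsSelfAdjoint s) {φ : ℝ} (h : a * s = cexp (φ * I) • (s * a)) (hne : a * s ≠ 0) :
    Real.sin φ = 0 := by
  have hstar : star (a * s) = s * a := by rw [star_mul, ha.star_eq, hs.star_eq]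
  set μ := cexp ((-(φ / 2) : ℝ) * I)
  have hR : IsSelfAdjoint (μ • (a * s)) :=
    isSelfAdjoint_exp_smul_of_eq_exp_smul_star (hstar ▸ h)
  have : IsStarNormal (a * s) := ⟨by rw [hstar, h]; exact (Commute.refl _).smul_right _⟩
  obtain ⟨z, hz, hz0⟩ := exists_mem_spectrum_ne_zero hne
  have hz' : star z ∈ spectrum ℂ (a * s) := by
    have : z ∈ spectrum ℂ (s * a) \ {0} := spectrum.nonzero_mul_comm (𝕜 := ℂ) a s ▸ ⟨hz, hz0⟩
    rw [← hstar, spectrum.map_star] at this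
    simpa using this.1
  have hw : (μ * z).im = 0 := im_mul_eq_zero_of_isSelfAdjoint_smul hR hz
  have hw' : (star μ * z).im = 0 := by
    have := im_mul_eq_zero_of_isSelfAdjoint_smul hR hz'
    simp only [mul_im, Complex.star_def, conj_re, conj_im] at this ⊢
    linarith
  have hμ : star μ = cexp (φ * I) * μ := by
    rw [star_exp_ofReal_mul_I, ← exp_add]
    congr 1
    push_cast
    ring
  have hwre : (μ * z).re ≠ 0 := fun hre ↦
    mul_ne_zero (exp_ne_zero _) hz0 (Complex.ext hre hw)
  rw [hμ, mul_assoc, mul_im, hw, mul_zero, zero_add, exp_ofReal_mul_I_im] at hw'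
  exact (mul_eq_zero.mp hw').resolve_right hwre

theorem sin_eq_zero_of_isSelfAdjoint_left {a b : A} (ha : IsSelfAdjoint a) {φ : ℝ}
    (h : a * b = cexp (φ * I) • (b * a)) (hne : a * b ≠ 0) : Real.sin φ = 0 := by
  have hb : b ∈ twistedCommutant a (cexp (φ * I)) := mem_twistedCommutant.mpr h
  have hre := mem_twistedCommutant.mp (ha.realPart_mem_twistedCommutant hb)
  have him := mem_twistedCommutant.mp (ha.imaginaryPart_mem_twistedCommutant hb)
  by_cases hre0 : a * ℜ b = 0
  · refine sin_eq_zero_of_isSelfAdjoint_of_isSelfAdjoint ha (ℑ b).2 him fun him0 ↦ hne ?_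
    rw [← realPart_add_I_smul_imaginaryPart b, mul_add, mul_smul_comm, hre0, him0, smul_zero,
      add_zero]
  · exact sin_eq_zero_of_isSelfAdjoint_of_isSelfAdjoint ha (ℜ b).2 hre hre0

theorem sin_eq_zero_of_isSelfAdjoint_right {a b : A} (hb : IsSelfAdjoint b) {φ : ℝ}
    (h : a * b = cexp (φ * I) • (b * a)) (hne : a * b ≠ 0) : Real.sin φ = 0 := by
  have h' := star_mul_eq_exp_smul_mul_star h
  rw [hb.star_eq] at h'
  have hne' : b * star a ≠ 0 := by rwa [← hb.star_eq, ← star_mul, star_ne_zero]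
  simpa using sin_eq_zero_of_isSelfAdjoint_left hb h' hne'

theorem mul_eq_zero_of_nonneg_of_mul_eq_neg [PartialOrder A] [StarOrderedRing A]
    {a b : A} (ha : 0 ≤ a) (h : a * b = -(b * a)) : a * b = 0 := by
  have hsq : Commute (a * a) b := by
    rw [commute_iff_eq, mul_assoc, h, mul_neg, ← mul_assoc, h, neg_mul, neg_neg, mul_assoc]
  have hcomm : Commute (CFC.sqrt (a * a)) b := hsq.cfcₙ_nnreal NNReal.sqrt
  rw [CFC.sqrt_mul_self a] at hcomm
  have : IsAddTorsionFree A := .of_isTorsionFree ℂ A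
  rw [← self_eq_neg]
  nth_rewrite 1 [h]
  rw [hcomm.eq]

end CStarAlgebra

/-- Corollary to Brooke et al.. Let `A∘B ≠ 0` and
`A∘B = e^{iφ} • (B∘A)` with `φ ∈ [0, 2π)`. Then:
(1) if `A` or `B` is self-adjoint, `φ = 0` or `φ = π`;
(2) if both are self-adjoint and one of them is positive, `φ = 0`. -/
theorem anyonic_phase_constraints
    {H : Type*} [NormedAddCommGroup H] [InnerProductSpace ℂ H] [CompleteSpace H]
    (A B : H →L[ℂ] H) (φ : ℝ) (hφ0 : 0 ≤ φ) (hφ2π : φ < 2 * Real.pi)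
    (hne : A ∘L B ≠ 0)
    (hcomm : A ∘L B = Complex.exp (φ * Complex.I) • (B ∘L A)) :
    ((IsSelfAdjoint A ∨ IsSelfAdjoint B) → φ = 0 ∨ φ = Real.pi) ∧
      ((IsSelfAdjoint A ∧ IsSelfAdjoint B ∧ (A.IsPositive ∨ B.IsPositive)) → φ = 0) := by
  have hne' : A * B ≠ 0 := hne
  have h : A * B = cexp (φ * I) • (B * A) := hcomm
  have part1 : (IsSelfAdjoint A ∨ IsSelfAdjoint B) → φ = 0 ∨ φ = Real.pi := fun hsa ↦
    eq_zero_or_eq_pi_of_sin_eq_zero hφ0 hφ2π <| hsa.elim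
      (sin_eq_zero_of_isSelfAdjoint_left · h hne') (sin_eq_zero_of_isSelfAdjoint_right · h hne')
  refine ⟨part1, fun ⟨hA, _, hpos⟩ ↦ (part1 (.inl hA)).resolve_right ?_⟩
  rintro rfl
  have hanti : A * B = -(B * A) := by rwa [exp_pi_mul_I, neg_one_smul] at h
  rcases hpos with hApos | hBpos
  · exact hne' (mul_eq_zero_of_nonneg_of_mul_eq_neg (A.nonneg_iff_isPositive.mpr hApos) hanti)
  · have hBA := mul_eq_zero_of_nonneg_of_mul_eq_neg (B.nonneg_iff_isPositive.mpr hBpos)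
      (neg_eq_iff_eq_neg.mp hanti.symm)
    exact hne' (by rw [hanti, hBA, neg_zero])
end

section
/- Let X be a topological space with its Borel σ-algebra, H a complex Hilbert space, and M a measurement on X, i.e. a map M from the Borel sets of X to B(H) such that (i) for every countable family (Δₙ)ₙ of pairwise disjoint Borel sets and all x, y ∈ H, ∑ₙ ⟨M(Δₙ)x, M(Δₙ)y⟩ = ⟨M(⋃ₙ Δₙ)x, M(⋃ₙ Δₙ)y⟩, and (ii) M(X)† ∘ M(X) = 1. Then the map E defined by E(Δ) := M(Δ)† ∘ M(Δ) is a POVM on X: for every Borel set Δ, E(Δ) is an effect, i.e. 0 ≤ E(Δ) ≤ 1 in the ordering of self-adjoint operators; E is countably additive in the weak operator topology; and E(X) = 1. -/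
/-- A *measurement* on a topological space `X` (with its Borel σ-algebra):
(i) σ-additivity of `Δ ↦ M(Δ)†M(Δ)` in the weak operator topology, and
(ii) `M(X)† ∘ M(X) = 1`. -/
def IsMeasurement {X H : Type*} [TopologicalSpace X] [MeasurableSpace X] [BorelSpace X]
    [NormedAddCommGroup H] [InnerProductSpace ℂ H] [CompleteSpace H]
    (M : Set X → (H →L[ℂ] H)) : Prop :=
  (∀ Δ : ℕ → Set X, (∀ n, MeasurableSet (Δ n)) → Pairwise (Function.onFun Disjoint Δ) →
      ∀ x y : H,
        HasSum (fun n => (inner ℂ (M (Δ n) x) (M (Δ n) y) : ℂ))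
          (inner ℂ (M (⋃ n, Δ n) x) (M (⋃ n, Δ n) y))) ∧
    ContinuousLinearMap.adjoint (M Set.univ) ∘L M Set.univ = 1

/-- A *POVM* on a topological space `X` (with its Borel σ-algebra): every
`E(Δ)` is an effect (`0 ≤ E(Δ) ≤ 1` in the Loewner order), `E` is countably
additive in the weak operator topology, and `E(X) = 1`. -/
def IsPOVM {X H : Type*} [TopologicalSpace X] [MeasurableSpace X] [BorelSpace X]
    [NormedAddCommGroup H] [InnerProductSpace ℂ H] [CompleteSpace H]
    (E : Set X → (H →L[ℂ] H)) : Prop :=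
  (∀ Δ : Set X, MeasurableSet Δ → 0 ≤ E Δ ∧ E Δ ≤ 1) ∧
    (∀ Δ : ℕ → Set X, (∀ n, MeasurableSet (Δ n)) → Pairwise (Function.onFun Disjoint Δ) →
      ∀ x y : H,
        HasSum (fun n => (inner ℂ x (E (Δ n) y) : ℂ)) (inner ℂ x (E (⋃ n, Δ n) y))) ∧
    E Set.univ = 1

/-! The contraction bound `E(Δ) ≤ 1` comes from additivity on the partition `{Δ, X ∖ Δ}`:
`‖M(Δ)x‖² + ‖M(X ∖ Δ)x‖² = ‖M(X)x‖² = ‖x‖²`, so each `M(Δ)` has norm at most one, and for the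
positive operator `M(Δ)†M(Δ)` of norm `‖M(Δ)‖²` this is the same as `M(Δ)†M(Δ) ≤ 1`. -/

open Set ContinuousLinearMap

namespace IsMeasurement

variable {X H : Type*} [TopologicalSpace X] [MeasurableSpace X] [BorelSpace X]
    [NormedAddCommGroup H] [InnerProductSpace ℂ H] [CompleteSpace H]
    {M : Set X → (H →L[ℂ] H)}

theorem norm_apply_univ (hM : IsMeasurement M) (x : H) : ‖M univ x‖ = ‖x‖ :=
  (norm_map_iff_adjoint_comp_self _).mpr hM.2 x

theorem hasSum_norm_sq_apply (hM : IsMeasurement M) {Δ : ℕ → Set X}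
    (hmeas : ∀ n, MeasurableSet (Δ n)) (hdisj : Pairwise (Function.onFun Disjoint Δ)) (x : H) :
    HasSum (fun n => ‖M (Δ n) x‖ ^ 2) (‖M (⋃ n, Δ n) x‖ ^ 2) := by
  have h := hM.1 Δ hmeas hdisj x x
  simp only [inner_self_eq_norm_sq_to_K] at h
  exact_mod_cast h

theorem norm_apply_le (hM : IsMeasurement M) {Δ : Set X} (hΔ : MeasurableSet Δ) (x : H) :
    ‖M Δ x‖ ≤ ‖x‖ := by
  -- the partition `Δ, X ∖ Δ, ∅, ∅, …`
  let S := disjointed fun n => if n = 0 then Δ else univ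
  have hS_zero : S 0 = Δ := (disjointed_zero _).trans (if_pos rfl)
  have hS_meas : ∀ n, MeasurableSet (S n) :=
    MeasurableSet.disjointed fun n => by split_ifs <;> simp [hΔ]
  have hS_union : ⋃ n, S n = univ :=
    iUnion_disjointed.trans <| eq_univ_of_subset (subset_iUnion _ 1) (by simp)
  have hsum := hM.hasSum_norm_sq_apply hS_meas (disjoint_disjointed _) x
  rw [hS_union, hM.norm_apply_univ] at hsum
  have hle : ‖M (S 0) x‖ ^ 2 ≤ ‖x‖ ^ 2 := le_hasSum hsum 0 fun _ _ => by positivity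
  rw [hS_zero] at hle
  exact le_of_sq_le_sq hle (norm_nonneg x)

theorem norm_le_one (hM : IsMeasurement M) {Δ : Set X} (hΔ : MeasurableSet Δ) : ‖M Δ‖ ≤ 1 :=
  opNorm_le_bound _ zero_le_one fun x => by simpa using hM.norm_apply_le hΔ x

theorem adjoint_comp_self_le_one (hM : IsMeasurement M) {Δ : Set X} (hΔ : MeasurableSet Δ) :
    adjoint (M Δ) ∘L M Δ ≤ 1 := by
  refine (CStarAlgebra.norm_le_one_iff_of_nonneg _ (star_mul_self_nonneg (M Δ))).mp ?_
  rw [CStarRing.norm_star_mul_self]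
  exact mul_le_one₀ (hM.norm_le_one hΔ) (norm_nonneg _) (hM.norm_le_one hΔ)

end IsMeasurement

/-- If `M` is a measurement, then
`E(Δ) := M(Δ)† ∘ M(Δ)` is a POVM. -/
theorem measurement_induces_povm
    {X H : Type*} [TopologicalSpace X] [MeasurableSpace X] [BorelSpace X]
    [NormedAddCommGroup H] [InnerProductSpace ℂ H] [CompleteSpace H]
    (M : Set X → (H →L[ℂ] H)) (hM : IsMeasurement M) :
    IsPOVM (fun Δ => ContinuousLinearMap.adjoint (M Δ) ∘L M Δ) :=
  ⟨fun _ hΔ => ⟨star_mul_self_nonneg _, hM.adjoint_comp_self_le_one hΔ⟩,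
    fun Δ hmeas hdisj x y => by
      simpa only [comp_apply, adjoint_inner_right] using hM.1 Δ hmeas hdisj x y,
    hM.2⟩
end
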